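/- arXiv:2108.12387 — 7 statements merged into one kernel-verified Lean document; each statement's English description precedes it below -/
import Mathlib

section
/- If process p receives transaction t at time r_p and every broadcast message is delivered to every process within delay at most D of its broadcast time, and a conflicting transaction t' is broadcast at some time, then if p does not receive t' within AT·D time units after r_p (with AT ≥ 4), any other correct process q receives t before receiving t' (i.e., q's first-received transaction among {t, t'} is t). -/
/-- Bounded-delay delivery model: transaction `x` is broadcast at time `b x` and
delivered to process `q` at time `d q x` with `b x ≤ d q x ≤ b x + D`.
If `p` receives `t` and does not receive the conflicting `t'` within `AT·D`
after receiving `t` (with `AT ≥ 4`), then every other correct process `q`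
receives `t` before `t'`. -/
theorem first_received_is_t
    (Proc Tx : Type) (D AT : ℝ) (hD : 0 < D) (hAT : 4 ≤ AT)
    (b : Tx → ℝ) (d : Proc → Tx → ℝ)
    (hdeliver : ∀ q x, b x ≤ d q x ∧ d q x ≤ b x + D)
    (p : Proc) (t t' : Tx)
    (hlate : d p t + AT * D ≤ d p t') :
    ∀ q : Proc, d q t ≤ d q t' := by
  intro q
  obtain ⟨h1, h2⟩ := hdeliver q t
  obtain ⟨h3, h4⟩ := hdeliver q t'
  obtain ⟨h5, h6⟩ := hdeliver p t
  obtain ⟨h7, h8⟩ := hdeliver p t'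
  nlinarith [mul_le_mul_of_nonneg_right hAT hD.le]
end

section
/- Under the bounded-delay delivery model, if process p successfully ages transaction t (i.e., p receives a conflicting transaction t' only at time ≥ d_p(t) + AT·D, with AT ≥ 4), then for every correct process q, q receives t' at least (AT−2)·D time units after q received t; that is, the frozen age of t at q is at least AT−2 (measured in units of D). -/
/-- Part (1) of Lemma 1: under the bounded-delay delivery model, if process `p`
successfully ages transaction `t` (it receives the conflicting `t'` only at time
`≥ d p t + AT·D`, `AT ≥ 4`), then every correct process `q` receives `t'`
at least `(AT − 2)·D` after it received `t`: the frozen age of `t` at `q`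
is at least `AT − 2` in units of `D`. -/
theorem frozen_age_lower_bound
    (Proc Tx : Type) (D AT : ℝ) (hD : 0 < D) (hAT : 4 ≤ AT)
    (b : Tx → ℝ) (d : Proc → Tx → ℝ)
    (hdeliver : ∀ q x, b x ≤ d q x ∧ d q x ≤ b x + D)
    (p : Proc) (t t' : Tx)
    (hsuccess : AT * D ≤ d p t' - d p t) :
    ∀ q : Proc, (AT - 2) * D ≤ d q t' - d q t := by
  intro q
  obtain ⟨h1, h2⟩ := hdeliver q t
  obtain ⟨h3, h4⟩ := hdeliver q t'
  obtain ⟨h5, h6⟩ := hdeliver p t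
  obtain ⟨h7, h8⟩ := hdeliver p t'
  nlinarith
end

section
/- Under the bounded-delay delivery model with AT ≥ 4, if process p successfully ages transaction t, then no correct process q receives any transaction t' conflicting with t before receiving t itself; equivalently, d_q(t) ≤ d_q(t') for all correct q and all t' conflicting with t. -/
/-- Part (2) of Lemma 1: under the bounded-delay delivery model with `AT ≥ 4`,
if `p` successfully ages `t` (every conflicting `t'` arrives at `p` at least
`AT·D` after `t`), then no correct process `q` receives any transaction `t'`
conflicting with `t` before receiving `t` itself: `d q t ≤ d q t'`. -/
theorem no_conflict_received_first
    (Proc Tx : Type) (D AT : ℝ) (hD : 0 < D) (hAT : 4 ≤ AT)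
    (b : Tx → ℝ) (d : Proc → Tx → ℝ)
    (conflicts : Tx → Tx → Prop)
    (hdeliver : ∀ q x, b x ≤ d q x ∧ d q x ≤ b x + D)
    (p : Proc) (t : Tx)
    (hsuccess : ∀ t', conflicts t t' → AT * D ≤ d p t' - d p t) :
    ∀ (q : Proc) (t' : Tx), conflicts t t' → d q t ≤ d q t' := by
  intro q t' hc
  obtain ⟨h1, h2⟩ := hdeliver q t
  obtain ⟨h3, h4⟩ := hdeliver q t'
  obtain ⟨h5, h6⟩ := hdeliver p t
  obtain ⟨h7, h8⟩ := hdeliver p t'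
  have hs := hsuccess t' hc
  nlinarith [mul_le_mul_of_nonneg_right hAT hD.le]
end

section
/- If the promise relation at each correct process is downward-closed under causal dependency (a process promises t only after promising all transactions t causally depends on), and the 'eventually committed upon promised' property holds for transactions with no unpromised dependencies, then by induction over the (well-founded) causal dependency order: whenever a correct process promises a transaction t, every correct process eventually commits t together with all of t's (transitive) causal dependencies. -/
/-- Induction over the well-founded causal dependency order: if promises are
downward-closed under causal dependency, and the base
'eventually-committed-upon-promised' property holds for transactions all of
whose dependencies are already committed everywhere, then whenever a correct
process promises `t`, every correct process eventually commits `t` together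
with all of `t`'s transitive causal dependencies. -/
theorem promise_implies_commit_with_deps
    (Proc Tx : Type)
    (dep : Tx → Tx → Prop)            -- `dep t' t`: t causally depends on t'
    (hwf : WellFounded dep)
    (Promise Commit : Proc → Tx → Prop)
    -- causal order for promises: a promise of t entails promises of its deps
    (hdown : ∀ p t t', dep t' t → Promise p t → Promise p t')
    -- base property: if all deps of t are committed at every correct process,
    -- then a promise of t at one correct process yields commit everywhere
    (hbase : ∀ t, (∀ t', dep t' t → ∀ q : Proc, Commit q t') →
      ∀ p : Proc, Promise p t → ∀ q : Proc, Commit q t) :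
    ∀ (p : Proc) (t : Tx), Promise p t →
      (∀ q : Proc, Commit q t) ∧
      (∀ t', Relation.TransGen dep t' t → ∀ q : Proc, Commit q t') := by
  have main : ∀ t : Tx, ∀ p : Proc, Promise p t → ∀ q : Proc, Commit q t := by
    intro t
    induction t using hwf.induction with
    | _ t ih =>
      intro p hp q
      exact hbase t (fun t' hd q' => ih t' hd p (hdown p t t' hd hp) q') p hp q
  have down' : ∀ t' t, Relation.TransGen dep t' t → ∀ p, Promise p t → Promise p t' := by
    intro t' t htrans
    induction htrans with
    | single hd => exact fun p hp => hdown p _ _ hd hp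
    | tail _ hd ih => exact fun p hp => ih p (hdown p _ _ hd hp)
  intro p t hp
  exact ⟨main t p hp, fun t' htrans q => main t' p (down' t' t htrans p hp) q⟩
end

section
/- The source-order property holds for promises: if correct processes p and q both promise transactions t and t' issued by the same process r, then they promise them in the same relative order. Specifically: if t and t' have distinct sequence numbers, causal order (each transaction depends on all lower-seqno transactions from the same issuer) forces both processes to promise them in seqno order; if t ≠ t' have equal sequence numbers, a contradiction arises with the at-most-one-commit invariant via eventually-committed-upon-promised. -/
/-- Source order for promises: if correct processes `p` and `q` both promise
transactions `t` and `t'` issued by the same process, then they promise them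
in the same relative order (here `pt p t` is the time at which `p` promises a
promised transaction `t`). Distinct sequence numbers are promised in seqno
order by the causal order property; equal sequence numbers with `t ≠ t'`
contradict the at-most-one-commit invariant via
eventually-committed-upon-promised. -/
theorem source_order_for_promises
    (Proc Tx Issuer : Type)
    (issuer : Tx → Issuer) (seqno : Tx → ℕ)
    (Promise Commit : Proc → Tx → Prop)
    (pt : Proc → Tx → ℕ)   -- promise times
    -- (a) causal order: lower-seqno transactions of the same issuer are
    -- promised earlier
    (hcausal : ∀ (p : Proc) (t t' : Tx),
      Promise p t → Promise p t' → issuer t = issuer t' →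
      seqno t' < seqno t → pt p t' < pt p t)
    -- (b) eventually committed upon promised
    (hecup : ∀ (p : Proc) (t : Tx), Promise p t → ∀ q : Proc, Commit q t)
    -- (c) at most one of any conflicting pair is committed
    (hconflict : ∀ (q : Proc) (t t' : Tx),
      t ≠ t' → issuer t = issuer t' → seqno t = seqno t' →
      Commit q t → Commit q t' → False) :
    ∀ (p q : Proc) (t t' : Tx),
      Promise p t → Promise p t' → Promise q t → Promise q t' →
      issuer t = issuer t' →
      (pt p t < pt p t' ↔ pt q t < pt q t') := by
  intro p q t t' hpt hpt' hqt hqt' hiss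
  by_cases hEq : t = t'
  · subst hEq; simp
  rcases lt_trichotomy (seqno t) (seqno t') with h | h | h
  · have h1 := hcausal p t' t hpt' hpt hiss.symm h
    have h2 := hcausal q t' t hqt' hqt hiss.symm h
    exact iff_of_true h1 h2
  · exact absurd (hconflict p t t' hEq hiss h (hecup p t hpt p) (hecup p t' hpt' p)) (by simp)
  · have h1 := hcausal p t t' hpt hpt' hiss h
    have h2 := hcausal q t t' hqt hqt' hiss h
    exact iff_of_false (by omega) (by omega)
end

section
/- In the AT = 2(C+1) configuration, after a fragmentation attack splitting correct processes into fragment A (with RRS = 1 for t, holding a chain ending with t) and fragment B (with RRS = 0, holding a chain one block longer containing the conflict t'), the fragmentation heals after at most 2 further blocks: if A's chain grows by 2 blocks it strictly exceeds B's chain length and B adopts it by the longest-chain rule; if B's chain grows by 1 block, the t'-block is suffixed by ≥ 1 block so A's rejection condition (RRS = 1) is satisfied and A adopts B's longer chain. -/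
/-! Appending blocks to a chain gives every block already in it that many confirmations. Hence a
chain extended by at least one block free of `t'` has no `t'`-block with fewer than one
confirmation, and fragment A does not reject it; the length comparisons are arithmetic. -/

namespace List

variable {α : Type*}

def HasUnconfirmed (p : α → Prop) (k : ℕ) (l : List α) : Prop :=
  ∃ (j : ℕ) (b : α), l[j]? = some b ∧ p b ∧ l.length - (j + 1) < k

theorem not_hasUnconfirmed_append {p : α → Prop} {k : ℕ} (l : List α) {l' : List α}
    (hl' : ∀ b ∈ l', ¬ p b) (hk : k ≤ l'.length) : ¬ (l ++ l').HasUnconfirmed p k := by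
  rintro ⟨j, b, hjb, hpb, hfew⟩
  rcases lt_or_ge j l.length with hj | hj
  · rw [length_append] at hfew
    omega
  · rw [getElem?_append_right hj] at hjb
    exact hl' b (mem_of_getElem? hjb) hpb

end List

theorem fragmentation_heals_in_two_blocks_general
    (Block Tx : Type) (txs : Block → Set Tx) (t' : Tx)
    (n : ℕ) (cA cB : List Block)
    (hlenA : cA.length = n) (hlenB : cB.length = n + 1)
    -- fragment A rejects a chain iff the block containing t' is followed by
    -- fewer than RRS_A(t) = 1 blocks
    (RejectA : List Block → Prop)
    (hRejA : ∀ c, RejectA c ↔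
      ∃ (j : ℕ) (b : Block), (c)[j]? = some b ∧ t' ∈ txs b ∧
        c.length - (j + 1) < 1) :
    -- (1) extending cA by 2 blocks produces a chain strictly longer than cB
    -- (and without t', hence unrejectable), so B switches
    (∀ ext : List Block, ext.length = 2 →
      cB.length < (cA ++ ext).length ∧
      ((∀ b ∈ ext, t' ∉ txs b) → ¬ RejectA (cA ++ ext))) ∧
    -- (2) extending cB by one honest block (not re-including t') yields a
    -- chain that A does not reject and that is strictly longer than cA,
    -- so A switches
    (∀ bnew : Block, t' ∉ txs bnew →
      ¬ RejectA (cB ++ [bnew]) ∧ cA.length < (cB ++ [bnew]).length) := by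
  have hRej : ∀ c, RejectA c ↔ c.HasUnconfirmed (t' ∈ txs ·) 1 := hRejA
  refine ⟨fun ext hext => ⟨?_, fun hext_honest => ?_⟩, fun bnew hbnew => ⟨?_, ?_⟩⟩
  · simp [hlenA, hlenB, hext]
  · exact (hRej _).not.mpr (cA.not_hasUnconfirmed_append hext_honest (by omega))
  · exact (hRej _).not.mpr (cB.not_hasUnconfirmed_append (by simpa using hbnew) le_rfl)
  · simp [hlenA, hlenB]

/-- Healing after a fragmentation attack in the `AT = 2(C+1)` configuration.
Fragment A holds chain `cA` (length `n`, ending with `t`, no `t'`) with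
`RRS_A(t) = 1`; fragment B holds chain `cB` (length `n+1`, whose last block
contains the conflicting `t'`). Then: extending `cA` by 2 blocks makes it
strictly longer than `cB`, so B switches by the longest-chain rule; and
extending `cB` by 1 honest block leaves `t'` suffixed by ≥ 1 block, so A's
rejection condition is satisfied and A switches to the strictly longer
chain. -/
theorem fragmentation_heals_in_two_blocks
    (Block Tx : Type) (txs : Block → Set Tx) (t t' : Tx)
    (n : ℕ) (cA cB : List Block)
    (hlenA : cA.length = n) (hlenB : cB.length = n + 1)
    -- t' is contained (only) in the last block of cB
    (blast : Block) (hblast : cB[n]? = some blast) (ht' : t' ∈ txs blast)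
    (honlyB : ∀ (j : ℕ) (b : Block), cB[j]? = some b → t' ∈ txs b → j = n)
    -- cA contains no block with t'
    (hnotA : ∀ (j : ℕ) (b : Block), cA[j]? = some b → t' ∉ txs b)
    -- fragment A rejects a chain iff the block containing t' is followed by
    -- fewer than RRS_A(t) = 1 blocks
    (RejectA : List Block → Prop)
    (hRejA : ∀ c, RejectA c ↔
      ∃ (j : ℕ) (b : Block), (c)[j]? = some b ∧ t' ∈ txs b ∧
        c.length - (j + 1) < 1) :
    -- (1) extending cA by 2 blocks produces a chain strictly longer than cB
    -- (and without t', hence unrejectable), so B switches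
    (∀ ext : List Block, ext.length = 2 →
      cB.length < (cA ++ ext).length ∧
      ((∀ b ∈ ext, t' ∉ txs b) → ¬ RejectA (cA ++ ext))) ∧
    -- (2) extending cB by one honest block (not re-including t') yields a
    -- chain that A does not reject and that is strictly longer than cA,
    -- so A switches
    (∀ bnew : Block, t' ∉ txs bnew →
      ¬ RejectA (cB ++ [bnew]) ∧ cA.length < (cB ++ [bnew]).length) :=
  fragmentation_heals_in_two_blocks_general Block Tx txs t' n cA cB hlenA hlenB RejectA hRejA
end

section
/- The asset-transfer safety invariant holds under promises: if every correct process applies promised transfer transactions in an order consistent with causal order, and a transfer(a,b,x) is only issued when the issuer's locally computed balance of a (initial balance plus promised incoming transfers minus all previously issued outgoing transfers) is ≥ x, and source order holds for promises, then at every correct process, at every time, the computed balance of every account is nonnegative. -/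
/-- An asset transfer: `x` units move from account `src` to account `dst`,
with per-account sequence number `sn`. -/
structure Transfer (Account : Type) where
  src : Account
  dst : Account
  amt : ℝ
  sn : ℕ

/-- Balance of account `a` after applying the list `l` of transfers:
initial balance plus applied incoming minus applied outgoing. -/
def bal {Account : Type} [DecidableEq Account]
    (init : Account → ℝ) (l : List (Transfer Account)) (a : Account) : ℝ :=
  init a + ((l.filter (fun u => u.dst = a)).map Transfer.amt).sum
         - ((l.filter (fun u => u.src = a)).map Transfer.amt).sum

/-!
Induct on the number of applied transfers. Appending `u` can only lower the balance of `u.src`,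
so it suffices that, just before `u` is applied, the balance of `u.src` is at least `u.amt`.
The issuer checked exactly this against its own view `deps u`, and that view is pessimistic:
by causal order it contains no incoming transfer that has not already been applied, and by
completeness it misses no outgoing transfer that has.
-/

theorem List.sum_map_le_sum_map_of_subset {α M : Type*} [AddCommMonoid M] [PartialOrder M]
    [IsOrderedAddMonoid M] {l₁ l₂ : List α} {f : α → M} (h₁ : l₁.Nodup) (hsub : l₁ ⊆ l₂)
    (hf : ∀ a ∈ l₂, 0 ≤ f a) : (l₁.map f).sum ≤ (l₂.map f).sum := by
  obtain ⟨l, hperm, hl⟩ := List.subperm_of_subset h₁ hsub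
  rw [← (hperm.map f).sum_eq]
  exact (hl.map f).sum_le_sum (by simpa using hf)

theorem List.sum_map_eq_of_nodup_of_mem_iff {α M : Type*} [AddCommMonoid M] {l₁ l₂ : List α}
    (f : α → M) (h₁ : l₁.Nodup) (h₂ : l₂.Nodup) (h : ∀ a, a ∈ l₁ ↔ a ∈ l₂) :
    (l₁.map f).sum = (l₂.map f).sum :=
  (((List.perm_ext_iff_of_nodup h₁ h₂).2 h).map f).sum_eq

section Balance

variable {Account : Type} [DecidableEq Account] (init : Account → ℝ)

theorem bal_append_singleton (l : List (Transfer Account)) (u : Transfer Account) (a : Account) :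
    bal init (l ++ [u]) a
      = bal init l a + (if u.dst = a then u.amt else 0) - (if u.src = a then u.amt else 0) := by
  simp only [bal, List.filter_append, List.map_append, List.sum_append]
  by_cases hdst : u.dst = a <;> by_cases hsrc : u.src = a <;> simp [hdst, hsrc] <;> ring

theorem bal_nonneg_append_singleton {l : List (Transfer Account)} {u : Transfer Account}
    (hl : ∀ a, 0 ≤ bal init l a) (hu : 0 ≤ u.amt) (hcover : u.amt ≤ bal init l u.src)
    (a : Account) : 0 ≤ bal init (l ++ [u]) a := by
  rw [bal_append_singleton]
  have := hl a
  by_cases hsrc : u.src = a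
  · subst hsrc
    split_ifs <;> linarith
  · split_ifs <;> linarith

theorem bal_le_bal_of_subset {d l : List (Transfer Account)} {a : Account}
    (hd : d.Nodup) (hl : l.Nodup) (hpos : ∀ v ∈ l, 0 ≤ v.amt) (hsub : d ⊆ l)
    (hout : ∀ v ∈ l, v.src = a → v ∈ d) : bal init d a ≤ bal init l a := by
  have hin_le : ((d.filter (·.dst = a)).map Transfer.amt).sum
      ≤ ((l.filter (·.dst = a)).map Transfer.amt).sum := by
    refine List.sum_map_le_sum_map_of_subset (hd.filter _) (fun v hv => ?_)
      (fun v hv => hpos v (List.mem_of_mem_filter hv))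
    simp only [List.mem_filter] at hv ⊢
    exact ⟨hsub hv.1, hv.2⟩
  have hout_eq : ((d.filter (·.src = a)).map Transfer.amt).sum
      = ((l.filter (·.src = a)).map Transfer.amt).sum := by
    refine List.sum_map_eq_of_nodup_of_mem_iff _ (hd.filter _) (hl.filter _) fun v => ?_
    simp only [List.mem_filter, decide_eq_true_eq]
    exact ⟨fun hv => ⟨hsub hv.1, hv.2⟩, fun hv => ⟨hout v hv.1 hv.2, hv.2⟩⟩
  unfold bal
  linarith

end Balance

theorem balances_nonnegative_general
    (Proc Account : Type) [DecidableEq Account]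
    (init : Account → ℝ) (hinit : ∀ a, 0 ≤ init a)
    (L : Proc → List (Transfer Account))   -- applied transfers, in order
    (deps : Transfer Account → List (Transfer Account))
    -- amounts are positive
    (hpos : ∀ (p : Proc), ∀ u ∈ L p, 0 < u.amt)
    -- no transfer is applied twice
    (hnodup : ∀ p : Proc, (L p).Nodup)
    (hdepsnodup : ∀ u : Transfer Account, (deps u).Nodup)
    -- issuance guard: the issuer's locally computed balance of the source
    -- account (initial + promised incoming deps − declared outgoing deps,
    -- the latter being all previously issued outgoing transfers) covers amt
    (hguard : ∀ (p : Proc), ∀ u ∈ L p,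
      u.amt ≤ init u.src
        + (((deps u).filter (fun v => v.dst = u.src)).map Transfer.amt).sum
        - (((deps u).filter (fun v => v.src = u.src)).map Transfer.amt).sum)
    -- causal order: when u is applied at position k, all its declared
    -- dependencies were applied before it
    (hcausal : ∀ (p : Proc) (k : ℕ) (u : Transfer Account),
      (L p)[k]? = some u → ∀ v ∈ deps u, v ∈ (L p).take k)
    -- completeness for outgoing: any earlier-applied outgoing transfer of
    -- u's source account is among u's declared dependencies
    (houtcomplete : ∀ (p : Proc) (k : ℕ) (u : Transfer Account),
      (L p)[k]? = some u → ∀ v ∈ (L p).take k,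
        v.src = u.src → v ∈ deps u) :
    ∀ (p : Proc) (k : ℕ) (a : Account),
      0 ≤ bal init ((L p).take k) a := by
  intro p k
  induction k with
  | zero => simpa [bal] using hinit
  | succ k ih =>
    rw [List.take_add_one]
    cases hu : (L p)[k]? with
    | none => simpa using ih
    | some u =>
      have huL : u ∈ L p := List.mem_of_getElem? hu
      have hprefix := List.take_sublist k (L p)
      have hcovered_in_view : u.amt ≤ bal init (deps u) u.src := hguard p u huL
      have hview : bal init (deps u) u.src ≤ bal init ((L p).take k) u.src :=
        bal_le_bal_of_subset init (hdepsnodup u) ((hnodup p).sublist hprefix)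
          (fun v hv => (hpos p v (hprefix.subset hv)).le) (hcausal p k u hu)
          (houtcomplete p k u hu)
      exact bal_nonneg_append_singleton init ih (hpos p u huL).le
        (hcovered_in_view.trans hview)

/-- Asset-transfer safety under promises: if promised transfers are applied in
an order consistent with causal order, transfers are only issued when the
issuer's locally computed balance covers the amount, and source order holds,
then at every correct process and at every time the computed balance of every
account is nonnegative. -/
theorem balances_nonnegative
    (Proc Account : Type) [DecidableEq Account]
    [DecidableEq (Transfer Account)]
    (init : Account → ℝ) (hinit : ∀ a, 0 ≤ init a)
    (L : Proc → List (Transfer Account))   -- applied transfers, in order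
    (deps : Transfer Account → List (Transfer Account))
    -- amounts are positive
    (hpos : ∀ (p : Proc), ∀ u ∈ L p, 0 < u.amt)
    -- no transfer is applied twice
    (hnodup : ∀ p : Proc, (L p).Nodup)
    (hdepsnodup : ∀ u : Transfer Account, (deps u).Nodup)
    -- source order: at most one transfer per (account, seqno)
    (hseq : ∀ (p : Proc), ∀ u ∈ L p, ∀ v ∈ L p,
      u.src = v.src → u.sn = v.sn → u = v)
    -- issuance guard: the issuer's locally computed balance of the source
    -- account (initial + promised incoming deps − declared outgoing deps,
    -- the latter being all previously issued outgoing transfers) covers amt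
    (hguard : ∀ (p : Proc), ∀ u ∈ L p,
      u.amt ≤ init u.src
        + (((deps u).filter (fun v => v.dst = u.src)).map Transfer.amt).sum
        - (((deps u).filter (fun v => v.src = u.src)).map Transfer.amt).sum)
    -- dependencies have positive amounts and do not include u itself
    (hdeppos : ∀ (u : Transfer Account), ∀ v ∈ deps u, 0 < v.amt ∧ v ≠ u)
    -- causal order: when u is applied at position k, all its declared
    -- dependencies were applied before it
    (hcausal : ∀ (p : Proc) (k : ℕ) (u : Transfer Account),
      (L p)[k]? = some u → ∀ v ∈ deps u, v ∈ (L p).take k)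
    -- completeness for outgoing: any earlier-applied outgoing transfer of
    -- u's source account is among u's declared dependencies
    (houtcomplete : ∀ (p : Proc) (k : ℕ) (u : Transfer Account),
      (L p)[k]? = some u → ∀ v ∈ (L p).take k,
        v.src = u.src → v ∈ deps u) :
    ∀ (p : Proc) (k : ℕ) (a : Account),
      0 ≤ bal init ((L p).take k) a :=
  balances_nonnegative_general Proc Account init hinit L deps hpos hnodup hdepsnodup hguard hcausal
    houtcomplete
end
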